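/- Let σ ≥ 2 and n ≥ 1 be natural numbers, let ρ, r be natural numbers and m : Fin r → ℕ with m i ≥ 2 for every i, and set E := 2ρ − 2 + ∑_{i : Fin r} (1 − 1/(m i)) as a rational number. If E > 0, E ≠ 1/42, and (2σ − 2 : ℚ) = n · E, then n ≤ 48·(σ − 1). -/

import Mathlib

/-!
Every term `1 - 1/mᵢ` lies in `[1/2, 1)`, so `E ≥ 1/2` once `4ρ + r ≥ 5`, while `E ≤ 0` when
`2ρ + r ≤ 2`. For `ρ = 0` and `r = 4`, positivity forces some `mᵢ ≥ 3`, whence `E ≥ 1/6`. For `ρ = 0`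
and `r = 3` a case analysis on the sorted triple `a ≤ b ≤ c` shows that the positive values of
`1 - 1/a - 1/b - 1/c` are `1/42` (at `(2, 3, 7)`) and values `≥ 1/24` (the least at `(2, 3, 8)`).
Hence `E ≥ 1/24`, and `2σ - 2 = n E` gives `n ≤ 48 (σ - 1)`.
-/

open Finset

/-- `E(ρ, m)`: the hyperbolic area of a Fuchsian group of signature `(ρ; m)`, divided by `2π`. -/
def signatureArea (ρ : ℕ) {r : ℕ} (m : Fin r → ℕ) : ℚ :=
  2 * (ρ : ℚ) - 2 + ∑ i : Fin r, (1 - 1 / (m i : ℚ))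

lemma one_div_natCast_le_one_div {k n : ℕ} (hk : 0 < k) (h : k ≤ n) :
    1 / (n : ℚ) ≤ 1 / k :=
  one_div_le_one_div_of_le (by exact_mod_cast hk) (by exact_mod_cast h)

lemma half_le_one_sub_one_div {k : ℕ} (hk : 2 ≤ k) : (1 : ℚ) / 2 ≤ 1 - 1 / k := by
  have := one_div_natCast_le_one_div (by norm_num) hk
  norm_num at this ⊢
  linarith

lemma one_div_24_le_of_sorted {a b c : ℕ} (ha : 2 ≤ a) (hab : a ≤ b) (hbc : b ≤ c)
    (hpos : 0 < 1 - 1 / (a : ℚ) - 1 / b - 1 / c) (hne : 1 - 1 / (a : ℚ) - 1 / b - 1 / c ≠ 1 / 42) :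
    1 / 24 ≤ 1 - 1 / (a : ℚ) - 1 / b - 1 / c := by
  rcases le_or_gt 5 b with hb | hb
  · have h5 := one_div_natCast_le_one_div (by norm_num) hb
    have h5' := one_div_natCast_le_one_div (by norm_num) (hb.trans hbc)
    have h2 := one_div_natCast_le_one_div (by norm_num) ha
    push_cast at h2 h5 h5'
    linarith
  have ha4 : a ≤ 4 := by omega
  rcases le_or_gt 8 c with hc | hc
  · have h8 := one_div_natCast_le_one_div (by norm_num) hc
    have hc0 : (0 : ℚ) < 1 / c := one_div_pos.2 (by exact_mod_cast (by omega : 0 < c))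
    push_cast at h8
    interval_cases a <;> interval_cases b <;> push_cast at hpos ⊢ <;> linarith
  · interval_cases a <;> interval_cases b <;> interval_cases c <;> norm_num at *

section signatureArea

variable {ρ r : ℕ} {m : Fin r → ℕ}

lemma signatureArea_comp_perm (π : Equiv.Perm (Fin r)) :
    signatureArea ρ (m ∘ π) = signatureArea ρ m := by
  simp only [signatureArea, Function.comp_apply, Equiv.sum_comp π (fun i => 1 - 1 / (m i : ℚ))]

lemma signatureArea_le_two_mul_sub_two_add_card :
    signatureArea ρ m ≤ 2 * ρ - 2 + r := by
  have : ∑ i : Fin r, (1 - 1 / (m i : ℚ)) ≤ ∑ _i : Fin r, 1 :=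
    sum_le_sum fun i _ => sub_le_self _ (by positivity)
  simp only [sum_const, card_univ, Fintype.card_fin, nsmul_eq_mul, mul_one] at this
  unfold signatureArea
  linarith

lemma two_mul_sub_two_add_half_card_le (hm : ∀ i, 2 ≤ m i) :
    2 * ρ - 2 + r / 2 ≤ signatureArea ρ m := by
  have : ∑ _i : Fin r, (1 : ℚ) / 2 ≤ ∑ i : Fin r, (1 - 1 / (m i : ℚ)) :=
    sum_le_sum fun i _ => half_le_one_sub_one_div (hm i)
  simp only [sum_const, card_univ, Fintype.card_fin, nsmul_eq_mul] at this
  unfold signatureArea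
  linarith

lemma two_mul_sub_two_add_half_card_add_one_div_6_le (hm : ∀ i, 2 ≤ m i) {i : Fin r}
    (hi : 3 ≤ m i) :
    2 * ρ - 2 + r / 2 + 1 / 6 ≤ signatureArea ρ m := by
  have hexcess : (1 : ℚ) / 6 ≤ ∑ j : Fin r, (1 / 2 - 1 / (m j : ℚ)) := by
    have h3 := one_div_natCast_le_one_div (by norm_num) hi
    have := single_le_sum (f := fun j : Fin r => 1 / 2 - 1 / (m j : ℚ))
      (fun j _ => sub_nonneg.2 (by linarith [half_le_one_sub_one_div (hm j)])) (mem_univ i)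
    norm_num at h3 this ⊢
    linarith
  simp only [signatureArea, sum_sub_distrib, sum_const, card_univ, Fintype.card_fin,
    nsmul_eq_mul] at hexcess ⊢
  linarith

lemma one_div_24_le_signatureArea_zero_of_three {m : Fin 3 → ℕ} (hm : ∀ i, 2 ≤ m i)
    (hpos : 0 < signatureArea 0 m) (hne : signatureArea 0 m ≠ 1 / 42) :
    1 / 24 ≤ signatureArea 0 m := by
  have hsort := signatureArea_comp_perm (ρ := 0) (m := m) (Tuple.sort m)
  have hmono := Tuple.monotone_sort m
  have htriple : signatureArea 0 (m ∘ Tuple.sort m) =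
      1 - 1 / ((m ∘ Tuple.sort m) 0 : ℚ) - 1 / ((m ∘ Tuple.sort m) 1 : ℚ) -
        1 / ((m ∘ Tuple.sort m) 2 : ℚ) := by
    simp only [signatureArea, Fin.sum_univ_three]
    push_cast
    ring
  rw [← hsort, htriple] at hpos hne ⊢
  exact one_div_24_le_of_sorted (hm _) (hmono (by decide)) (hmono (by decide)) hpos hne

lemma one_div_6_le_signatureArea_zero_of_four {m : Fin 4 → ℕ} (hm : ∀ i, 2 ≤ m i)
    (hpos : 0 < signatureArea 0 m) : 1 / 6 ≤ signatureArea 0 m := by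
  obtain ⟨i, hi⟩ : ∃ i, 3 ≤ m i := by
    by_contra! h
    have hm2 : m = fun _ => 2 := funext fun i => by linarith [hm i, h i]
    subst hm2
    norm_num [signatureArea] at hpos
  have := two_mul_sub_two_add_half_card_add_one_div_6_le (ρ := 0) hm hi
  push_cast at this
  linarith

lemma one_div_24_le_signatureArea (hm : ∀ i, 2 ≤ m i) (hpos : 0 < signatureArea ρ m)
    (hne : signatureArea ρ m ≠ 1 / 42) : 1 / 24 ≤ signatureArea ρ m := by
  by_cases h5 : 5 ≤ 4 * ρ + r
  · have := two_mul_sub_two_add_half_card_le (ρ := ρ) hm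
    have : (5 : ℚ) ≤ 4 * ρ + r := by exact_mod_cast h5
    linarith
  have h3 : 3 ≤ 2 * ρ + r := by
    by_contra! h
    have := signatureArea_le_two_mul_sub_two_add_card (ρ := ρ) (m := m)
    have : (2 * ρ + r : ℚ) ≤ 2 := by exact_mod_cast (by omega : 2 * ρ + r ≤ 2)
    linarith
  obtain ⟨rfl, rfl | rfl⟩ : ρ = 0 ∧ (r = 3 ∨ r = 4) := by omega
  · exact one_div_24_le_signatureArea_zero_of_three hm hpos hne
  · linarith [one_div_6_le_signatureArea_zero_of_four hm hpos]

end signatureArea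

theorem hurwitz_bound_of_ne_one_div_42_general
    (σ n : ℕ)
    (ρ r : ℕ) (m : Fin r → ℕ) (hm : ∀ i, 2 ≤ m i)
    (E : ℚ) (hE : E = 2 * (ρ : ℚ) - 2 + ∑ i : Fin r, (1 - 1 / (m i : ℚ)))
    (hpos : 0 < E) (hne : E ≠ 1 / 42) (heq : (2 * (σ : ℚ) - 2) = (n : ℚ) * E) :
    n ≤ 48 * (σ - 1) := by
  have h24 : 1 / 24 ≤ E := by
    subst hE
    exact one_div_24_le_signatureArea hm hpos hne
  have hnE : (n : ℚ) * (1 / 24) ≤ n * E := mul_le_mul_of_nonneg_left h24 n.cast_nonneg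
  have : (n : ℚ) + 48 ≤ 48 * σ := by linarith
  have : n + 48 ≤ 48 * σ := by exact_mod_cast this
  omega

theorem hurwitz_bound_of_ne_one_div_42
    (σ n : ℕ) (hσ : 2 ≤ σ) (hn : 1 ≤ n)
    (ρ r : ℕ) (m : Fin r → ℕ) (hm : ∀ i, 2 ≤ m i)
    (E : ℚ) (hE : E = 2 * (ρ : ℚ) - 2 + ∑ i : Fin r, (1 - 1 / (m i : ℚ)))
    (hpos : 0 < E) (hne : E ≠ 1 / 42) (heq : (2 * (σ : ℚ) - 2) = (n : ℚ) * E) :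
    n ≤ 48 * (σ - 1) :=
  hurwitz_bound_of_ne_one_div_42_general σ n ρ r m hm E hE hpos hne heq
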